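/- For every R > 0 and every natural number N ≥ 1, the function k(R) = N·(∫₀ᴿ e^{-s²/2} s^{N-1} ds)/(∫₀ᴿ e^{-s²/2} s^{N+1} ds) is strictly decreasing in R. -/

import Mathlib

/-!
Writing `w(s) = e^{-s²/2} s^{N-1}`, we have `k(R) = N / m(R)` where
`m(R) = (∫₀ᴿ s² w) / (∫₀ᴿ w)` is the mean of `s²` for the weight `w` on `[0, R]`. Enlarging the
interval from `[0, a]` to `[0, b]` adds mass only where `s² ≥ a²`, while on `[0, a]` the mean is
strictly below `a²`; hence `m` is strictly increasing.
-/

open Real intervalIntegral Set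

section WeightedMean

variable {w φ : ℝ → ℝ} {c a b : ℝ}

theorem integral_mul_lt_mul_integral_of_strictMonoOn (hw : Continuous w)
    (hw_pos : ∀ x ∈ Ioi c, 0 < w x) (hφ : Continuous φ) (hφ_mono : StrictMonoOn φ (Ici c))
    (hca : c < a) :
    ∫ s in c..a, φ s * w s < φ a * ∫ s in c..a, w s := by
  rw [← integral_const_mul]
  refine integral_lt_integral_of_continuousOn_of_le_of_exists_lt hca
    (hφ.mul hw).continuousOn (continuous_const.mul hw).continuousOn (fun x hx => ?_) ?_
  · have hφx : φ x ≤ φ a := hφ_mono.monotoneOn (mem_Ici.2 hx.1.le) (mem_Ici.2 hca.le) hx.2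
    exact mul_le_mul_of_nonneg_right hφx (hw_pos x hx.1).le
  · refine ⟨(c + a) / 2, ⟨by linarith, by linarith⟩, ?_⟩
    have hφx : φ ((c + a) / 2) < φ a :=
      hφ_mono (mem_Ici.2 (by linarith)) (mem_Ici.2 hca.le) (by linarith)
    exact mul_lt_mul_of_pos_right hφx (hw_pos _ (by simp only [mem_Ioi]; linarith))

theorem mul_integral_le_integral_mul_of_monotoneOn (hw : Continuous w)
    (hw_nonneg : ∀ x ∈ Icc a b, 0 ≤ w x) (hφ : Continuous φ) (hφ_mono : MonotoneOn φ (Icc a b))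
    (hab : a ≤ b) :
    φ a * ∫ s in a..b, w s ≤ ∫ s in a..b, φ s * w s := by
  rw [← integral_const_mul]
  refine integral_mono_on hab ((continuous_const.mul hw).intervalIntegrable a b)
    ((hφ.mul hw).intervalIntegrable a b) fun x hx => ?_
  exact mul_le_mul_of_nonneg_right
    (hφ_mono (left_mem_Icc.2 hab) hx hx.1) (hw_nonneg x hx)

theorem integral_pos_of_pos_on_Ioi (hw : Continuous w) (hw_pos : ∀ x ∈ Ioi c, 0 < w x)
    (hca : c ≤ a) (hab : a < b) : 0 < ∫ s in a..b, w s :=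
  intervalIntegral_pos_of_pos_on (hw.intervalIntegrable a b)
    (fun x hx => hw_pos x (lt_of_le_of_lt hca hx.1)) hab

/-- The mean of `φ` on `[c, R]` with respect to the weight `w`. -/
noncomputable def weightedMean (w φ : ℝ → ℝ) (c R : ℝ) : ℝ :=
  (∫ s in c..R, φ s * w s) / ∫ s in c..R, w s

theorem weightedMean_pos (hw : Continuous w) (hw_pos : ∀ x ∈ Ioi c, 0 < w x) (hφ : Continuous φ)
    (hφ_pos : ∀ x ∈ Ioi c, 0 < φ x) {R : ℝ} (hR : c < R) : 0 < weightedMean w φ c R :=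
  div_pos (integral_pos_of_pos_on_Ioi (hφ.mul hw)
    (fun x hx => mul_pos (hφ_pos x hx) (hw_pos x hx)) le_rfl hR)
    (integral_pos_of_pos_on_Ioi hw hw_pos le_rfl hR)

theorem strictMonoOn_weightedMean (hw : Continuous w) (hw_pos : ∀ x ∈ Ioi c, 0 < w x)
    (hφ : Continuous φ) (hφ_mono : StrictMonoOn φ (Ici c)) :
    StrictMonoOn (weightedMean w φ c) (Ioi c) := by
  intro a (hca : c < a) b _ hab
  have hA₁ : 0 < ∫ s in c..a, w s := integral_pos_of_pos_on_Ioi hw hw_pos le_rfl hca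
  have hA₂ : 0 < ∫ s in a..b, w s := integral_pos_of_pos_on_Ioi hw hw_pos hca.le hab
  have hB₁ : ∫ s in c..a, φ s * w s < φ a * ∫ s in c..a, w s :=
    integral_mul_lt_mul_integral_of_strictMonoOn hw hw_pos hφ hφ_mono hca
  have hB₂ : φ a * ∫ s in a..b, w s ≤ ∫ s in a..b, φ s * w s :=
    mul_integral_le_integral_mul_of_monotoneOn hw
      (fun x hx => (hw_pos x (hca.trans_le hx.1)).le) hφ
      (hφ_mono.monotoneOn.mono fun x hx => mem_Ici.2 (hca.le.trans hx.1)) hab.le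
  unfold weightedMean
  rw [← integral_add_adjacent_intervals (hw.intervalIntegrable c a) (hw.intervalIntegrable a b),
    ← integral_add_adjacent_intervals (f := fun s => φ s * w s)
      ((hφ.mul hw).intervalIntegrable c a) ((hφ.mul hw).intervalIntegrable a b),
    div_lt_div_iff₀ hA₁ (add_pos hA₁ hA₂)]
  nlinarith [mul_lt_mul_of_pos_right hB₁ hA₂, mul_le_mul_of_nonneg_left hB₂ hA₁.le]

end WeightedMean

theorem strictAntiOn_k (N : ℕ) (hN : 1 ≤ N) :
    StrictAntiOn
      (fun R : ℝ =>
        (N : ℝ) * (∫ s in (0:ℝ)..R, Real.exp (-s ^ 2 / 2) * s ^ (N - 1)) /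
          (∫ s in (0:ℝ)..R, Real.exp (-s ^ 2 / 2) * s ^ (N + 1)))
      (Set.Ioi 0) := by
  set w : ℝ → ℝ := fun s => Real.exp (-s ^ 2 / 2) * s ^ (N - 1)
  have hw : Continuous w := by fun_prop
  have hw_pos : ∀ x ∈ Ioi (0 : ℝ), 0 < w x := fun x (hx : 0 < x) => by positivity
  have hsq : Continuous fun s : ℝ => s ^ 2 := continuous_pow 2
  have hk : ∀ R, (N : ℝ) * (∫ s in (0:ℝ)..R, w s) /
      (∫ s in (0:ℝ)..R, Real.exp (-s ^ 2 / 2) * s ^ (N + 1)) =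
        N / weightedMean w (· ^ 2) 0 R := by
    intro R
    have hpow : ∀ s : ℝ, Real.exp (-s ^ 2 / 2) * s ^ (N + 1) = s ^ 2 * w s := fun s => by
      rw [show N + 1 = 2 + (N - 1) by omega, pow_add]; ring
    simp only [hpow, weightedMean, div_div_eq_mul_div]
  simp only [hk]
  intro a ha b hb hab
  exact div_lt_div_of_pos_left (by exact_mod_cast hN)
    (weightedMean_pos hw hw_pos hsq (fun x (hx : 0 < x) => by positivity) ha)
    (strictMonoOn_weightedMean hw hw_pos hsq (pow_left_strictMonoOn₀ two_ne_zero) ha hb hab)
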